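/- Let K ⊂ L be finite fields and C ⊆ Lⁿ a K-linear MDS code with column spaces V₁,…,Vₙ ⊆ K^k and k_L ≥ 3. Then for any three distinct indices i, j, l, one has V_l ∩ (V_i + V_j) = {0}. -/

import Mathlib

def columnSpace {K L : Type*} [Field K] [Field L] [Algebra K L]
    {m n : ℕ} {ι : Type*} (b : Module.Basis (Fin m) K L) (c : ι → (Fin n → L)) (i : Fin n) :
    Submodule K (ι → K) :=
  Submodule.span K (Set.range fun j : Fin m => fun r : ι => b.repr (c r i) j)

/-!
Fix a set `S ⊇ {i, j, l}` of `k_L` coordinates. A codeword vanishing on `S` has weight at most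
`n - k_L < d`, so restriction to `S` is injective on `C`, hence bijective because
`|C| = |L|^{k_L}`. Every element of the column space `V_p` has the form `r ↦ f (c_r p)` for a
functional `f : L → K`. If such elements for `p ∈ S` sum to zero, then `∑ f_p (u_p)` vanishes on
every codeword `u`; since codewords take arbitrary values on `S`, every `f_p` is zero. So the
`V_p`, `p ∈ S`, are independent.
-/

open Module

section Hamming

variable {ι β : Type*} [Fintype ι] [DecidableEq β]

theorem hammingNorm_add_card_le [Zero β] {x : ι → β} {S : Finset ι}
    (h : ∀ i ∈ S, x i = 0) : hammingNorm x + S.card ≤ Fintype.card ι := by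
  classical
  rw [← Finset.card_compl_add_card S]
  unfold hammingNorm
  gcongr
  exact fun i hi => Finset.mem_compl.2 fun hiS => (Finset.mem_filter.1 hi).2 (h i hiS)

variable [AddGroup β] {C : AddSubgroup (ι → β)} {d : ℕ} {S : Finset ι}

theorem injOn_restrict_of_card_lt (hd : ∀ u ∈ C, u ≠ 0 → d ≤ hammingNorm u)
    (hS : Fintype.card ι < S.card + d) : Set.InjOn (fun (u : ι → β) (s : S) => u s) C := by
  intro u hu v hv huv
  by_contra hne
  have hzero : ∀ i ∈ S, (u - v) i = 0 := fun i hi => sub_eq_zero.2 (congrFun huv ⟨i, hi⟩)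
  have hlow := hd _ (C.sub_mem hu hv) (sub_ne_zero.2 hne)
  have hup := hammingNorm_add_card_le hzero
  omega

theorem exists_mem_restrict_eq_of_card_eq [Finite β]
    (hd : ∀ u ∈ C, u ≠ 0 → d ≤ hammingNorm u) (hS : Fintype.card ι < S.card + d)
    (hC : Nat.card C = Nat.card β ^ S.card) (v : S → β) : ∃ u ∈ C, ∀ s : S, u s = v s := by
  let restrict : C → S → β := fun u s => (u : ι → β) s
  have hinj : Function.Injective restrict := fun u w h =>
    Subtype.ext (injOn_restrict_of_card_lt hd hS u.2 w.2 h)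
  have hbij : Function.Bijective restrict := by
    rw [Nat.bijective_iff_injective_and_card, Nat.card_fun, Nat.card_eq_fintype_card (α := S),
      Fintype.card_coe, hC]
    exact ⟨hinj, rfl⟩
  obtain ⟨u, hu⟩ := hbij.2 v
  exact ⟨u, u.2, congrFun hu⟩

end Hamming

section ColumnSpace

variable {ι κ : Type*}

def columnMap {R M : Type*} [CommSemiring R] [AddCommMonoid M] [Module R M]
    (c : ι → κ → M) (p : κ) : Dual R M →ₗ[R] ι → R :=
  LinearMap.pi fun r => Dual.eval R M (c r p)

variable {K L : Type*} [Field K] [Field L] [Algebra K L] {m n : ℕ}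

theorem columnSpace_eq_range (b : Basis (Fin m) K L) (c : ι → Fin n → L) (p : Fin n) :
    columnSpace b c p = LinearMap.range (columnMap c p) := by
  rw [columnSpace, ← Submodule.map_top, ← b.dualBasis.span_eq, Submodule.map_span,
    ← Set.range_comp]
  congr 2
  ext t r
  simp [columnMap]

variable {c : ι → Fin n → L} {τ : Type*} {e : τ → Fin n}

theorem injective_lsum_columnMap
    (hext : ∀ v : τ → L, ∃ u ∈ Submodule.span K (Set.range c), ∀ t, u (e t) = v t) :
    Function.Injective (Finsupp.lsum K fun t => columnMap (R := K) c (e t)) := by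
  classical
  rw [injective_iff_map_eq_zero]
  intro g hg
  let ψ : (Fin n → L) →ₗ[K] K := g.sum fun t f => f ∘ₗ LinearMap.proj (e t)
  have hψ : Submodule.span K (Set.range c) ≤ LinearMap.ker ψ := by
    rw [Submodule.span_le]
    rintro _ ⟨r, rfl⟩
    simpa [ψ, LinearMap.finsupp_sum_apply, Finsupp.sum, Finset.sum_apply, columnMap]
      using congrFun hg r
  ext t x
  obtain ⟨u, hu, hut⟩ := hext (Pi.single t x)
  have := hψ hu
  rw [LinearMap.mem_ker, LinearMap.finsupp_sum_apply, Finsupp.sum_eq_single t] at this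
  · simpa [hut] using this
  · intro s _ hst
    simp [hut, hst]
  · simp

theorem iSupIndep_columnSpace (b : Basis (Fin m) K L)
    (hext : ∀ v : τ → L, ∃ u ∈ Submodule.span K (Set.range c), ∀ t, u (e t) = v t) :
    iSupIndep fun t => columnSpace b c (e t) := by
  convert (Finsupp.lsum K fun t => columnMap (R := K) c (e t)).iSupIndep_map
    (injective_lsum_columnMap hext) (iSupIndep_range_lsingle τ K (Dual K L)) using 1
  funext t
  rw [columnSpace_eq_range, ← LinearMap.range_comp, Finsupp.lsum_comp_lsingle]

end ColumnSpace

theorem stmt_19_general {K L : Type*} [Field K] [Field L] [Algebra K L]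
    [Fintype L] [DecidableEq L] {m n k d kL : ℕ}
    (b : Module.Basis (Fin m) K L)
    (C : Submodule K (Fin n → L)) (c : Fin k → (Fin n → L))
    (hspan : Submodule.span K (Set.range c) = C)
    (hd_le : ∀ u ∈ C, u ≠ 0 → d ≤ hammingNorm u)
    (hd_eq : ∃ u ∈ C, u ≠ 0 ∧ hammingNorm u = d)
    (hkL : kL = n - d + 1) (hkL3 : 3 ≤ kL)
    (hMDS : Nat.card C = Fintype.card L ^ kL) :
    ∀ i j l : Fin n, i ≠ j → i ≠ l → j ≠ l →
      columnSpace b c l ⊓ (columnSpace b c i ⊔ columnSpace b c j) = ⊥ := by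
  intro i j l _ hil hjl
  obtain ⟨u₀, -, hu₀, hu₀d⟩ := hd_eq
  have hd : 0 < d := hu₀d ▸ hammingNorm_pos_iff.2 hu₀
  obtain ⟨S, hijlS, -, hS⟩ := Finset.exists_subsuperset_card_eq (Finset.subset_univ {i, j, l})
    (Finset.card_le_three.trans hkL3) (by simp; omega)
  have hext : ∀ v : S → L, ∃ u ∈ Submodule.span K (Set.range c), ∀ s : S, u s = v s := by
    rw [hspan]
    exact exists_mem_restrict_eq_of_card_eq (C := C.toAddSubgroup) hd_le (by simp; omega)
      (by rw [hS, Nat.card_eq_fintype_card (α := L), ← hMDS]; rfl)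
  have hdisj := (iSupIndep_columnSpace b hext).disjoint_biSup (x := ⟨l, hijlS (by simp)⟩)
    (y := {⟨i, hijlS (by simp)⟩, ⟨j, hijlS (by simp)⟩}) (by simp [hil.symm, hjl.symm])
  rw [iSup_pair] at hdisj
  exact hdisj.eq_bot

/-- For a `K`-linear MDS code with `k_L ≥ 3`, and any three distinct coordinates
`i, j, l`, the column spaces satisfy `V_l ∩ (V_i + V_j) = {0}`. -/
theorem stmt_19 {K L : Type*} [Field K] [Field L] [Algebra K L]
    [Fintype K] [Fintype L] [DecidableEq L] {m n k d kL : ℕ}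
    (hproper : ∃ ω : L, ω ∉ Set.range (algebraMap K L))
    (hn : 0 < n) (b : Module.Basis (Fin m) K L)
    (C : Submodule K (Fin n → L)) (c : Fin k → (Fin n → L))
    (hli : LinearIndependent K c) (hspan : Submodule.span K (Set.range c) = C)
    (hd_le : ∀ u ∈ C, u ≠ 0 → d ≤ hammingNorm u)
    (hd_eq : ∃ u ∈ C, u ≠ 0 ∧ hammingNorm u = d)
    (hkL : kL = n - d + 1) (hk : k = kL * m) (hkL3 : 3 ≤ kL)
    (hMDS : Nat.card C = Fintype.card L ^ kL) :
    ∀ i j l : Fin n, i ≠ j → i ≠ l → j ≠ l →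
      columnSpace b c l ⊓ (columnSpace b c i ⊔ columnSpace b c j) = ⊥ :=
  stmt_19_general b C c hspan hd_le hd_eq hkL hkL3 hMDS
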